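/- Let f be a concave size function, let S* be an optimal solution to f-DS, and let S_n, S_{n−1}, …, S_1 be the subsets produced by the greedy peeling on G. Then w(S*)/f(|S*|) ≤ 3 · max_{1≤i≤n} w(S_i)/f(i); that is, the greedy peeling is a 3-approximation algorithm for f-DS with concave size function f. -/

import Mathlib

/-!
Andersen–Chellapilla argument. Put `ρ = w(S)/|S|`. Repeatedly deleting vertices of degree below
`c = 2ρ/3` from `S` loses at most `c|S| = 2w(S)/3`, leaving a core `H` with minimum degree `≥ c`
and `w(H) ≥ w(S)/3`. Let `S_i` be the smallest peeling set containing `H`. If `i ≤ |S|`, then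
`w(S_{|S|}) ≥ w(H)`. Otherwise the vertex peeled from `S_i` lies in `H`, so every vertex of `S_i`
has degree `≥ c` and `w(S_i)/i ≥ c/2 = ρ/3`. Concavity of `f` makes `f(x)/x` non-increasing, which
turns the bound for `w(S_i)/i` with `i ≥ |S|` into one for `w(S_i)/f(i)`.
-/

structure WGraph (V : Type) [Fintype V] [DecidableEq V] where
  E : Finset (Sym2 V)
  not_diag : ∀ e ∈ E, ¬ e.IsDiag
  w : Sym2 V → ℝ
  w_pos : ∀ e ∈ E, 0 < w e

variable {V : Type} [Fintype V] [DecidableEq V]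

def WGraph.wS (G : WGraph V) (S : Finset V) : ℝ :=
  ∑ e ∈ G.E.filter (fun e => e ∈ S.sym2), G.w e

def WGraph.deg (G : WGraph V) (S : Finset V) (v : V) : ℝ :=
  ∑ u ∈ S.filter (fun u => s(u, v) ∈ G.E), G.w s(u, v)

namespace WGraph

variable (G : WGraph V)

lemma wS_nonneg (S : Finset V) : 0 ≤ G.wS S :=
  Finset.sum_nonneg fun e he => (G.w_pos e (Finset.mem_filter.mp he).1).le

lemma wS_mono {S T : Finset V} (h : S ⊆ T) : G.wS S ≤ G.wS T :=
  Finset.sum_le_sum_of_subset_of_nonneg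
    (Finset.monotone_filter_right _ fun _ _ he => Finset.sym2_mono h he)
    fun e he _ => (G.w_pos e (Finset.mem_filter.mp he).1).le

lemma deg_mono {S T : Finset V} (h : S ⊆ T) (v : V) : G.deg S v ≤ G.deg T v :=
  Finset.sum_le_sum_of_subset_of_nonneg (Finset.filter_subset_filter _ h)
    fun _ hu _ => (G.w_pos _ (Finset.mem_filter.mp hu).2).le

lemma deg_eq_sum_incident {S : Finset V} {v : V} (hv : v ∈ S) :
    G.deg S v = ∑ e ∈ G.E.filter (fun e => e ∈ S.sym2 ∧ v ∈ e), G.w e := by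
  have himage : G.E.filter (fun e => e ∈ S.sym2 ∧ v ∈ e) =
      (S.filter fun u => s(u, v) ∈ G.E).image fun u => s(u, v) := by
    ext e
    induction e using Sym2.ind with
    | _ a b =>
      simp only [Finset.mem_filter, Finset.mem_image]
      constructor
      · rintro ⟨he, hab, hve⟩
        obtain ⟨ha, hb⟩ := Finset.mk_mem_sym2_iff.mp hab
        rcases Sym2.mem_iff.mp hve with rfl | rfl
        · exact ⟨b, ⟨hb, Sym2.eq_swap ▸ he⟩, Sym2.eq_swap⟩
        · exact ⟨a, ⟨ha, he⟩, rfl⟩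
      · rintro ⟨u, ⟨hu, he⟩, hab⟩
        rw [← hab]
        exact ⟨he, Finset.mk_mem_sym2_iff.mpr ⟨hu, hv⟩, Sym2.mem_mk_right u v⟩
  rw [himage, Finset.sum_image fun _ _ _ _ h => Sym2.congr_left.mp h]
  rfl

lemma wS_eq_wS_erase_add_deg {S : Finset V} {v : V} (hv : v ∈ S) :
    G.wS S = G.wS (S.erase v) + G.deg S v := by
  have hoff : ∀ e, e ∈ S.sym2 ∧ v ∉ e ↔ e ∈ (S.erase v).sym2 := fun e => by
    simp only [Finset.mem_sym2_iff, Finset.mem_erase]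
    exact ⟨fun ⟨hS, hve⟩ a ha => ⟨fun h => hve (h ▸ ha), hS a ha⟩,
      fun h => ⟨fun a ha => (h a ha).2, fun hve => (h v hve).1 rfl⟩⟩
  rw [wS, wS, G.deg_eq_sum_incident hv, ← Finset.sum_filter_not_add_sum_filter _ (v ∈ ·),
    Finset.filter_filter, Finset.filter_filter, Finset.filter_congr fun e _ => hoff e]

lemma sum_deg_eq_two_mul_wS (S : Finset V) : ∑ v ∈ S, G.deg S v = 2 * G.wS S := by
  have hends : ∀ e ∈ G.E.filter (· ∈ S.sym2), S.filter (· ∈ e) = e.toFinset := by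
    intro e he
    ext a
    rw [Finset.mem_filter, Sym2.mem_toFinset]
    exact ⟨And.right, fun ha => ⟨Finset.mem_sym2_iff.mp (Finset.mem_filter.mp he).2 a ha, ha⟩⟩
  calc ∑ v ∈ S, G.deg S v
      = ∑ v ∈ S, ∑ e ∈ G.E.filter (· ∈ S.sym2), if v ∈ e then G.w e else 0 := by
        refine Finset.sum_congr rfl fun v hv => ?_
        rw [G.deg_eq_sum_incident hv, ← Finset.sum_filter, Finset.filter_filter]
    _ = ∑ e ∈ G.E.filter (· ∈ S.sym2), (S.filter (· ∈ e)).card * G.w e := by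
        rw [Finset.sum_comm]
        refine Finset.sum_congr rfl fun e _ => ?_
        rw [← Finset.sum_filter, Finset.sum_const, nsmul_eq_mul]
    _ = 2 * G.wS S := by
        rw [wS, Finset.mul_sum]
        refine Finset.sum_congr rfl fun e he => ?_
        rw [hends e he, Sym2.card_toFinset_of_not_isDiag e
          (G.not_diag e (Finset.mem_filter.mp he).1)]
        norm_num

lemma card_mul_le_two_mul_wS {S : Finset V} {c : ℝ} (h : ∀ v ∈ S, c ≤ G.deg S v) :
    S.card * c ≤ 2 * G.wS S := by
  simpa [G.sum_deg_eq_two_mul_wS] using Finset.card_nsmul_le_sum S (G.deg S) c h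

lemma exists_core (c : ℝ) (S : Finset V) :
    ∃ H ⊆ S, (∀ v ∈ H, c ≤ G.deg H v) ∧ G.wS S - c * (S.card - H.card) ≤ G.wS H := by
  induction S using Finset.strongInduction with
  | H S ih =>
    by_cases hS : ∀ v ∈ S, c ≤ G.deg S v
    · exact ⟨S, subset_rfl, hS, by simp⟩
    push Not at hS
    obtain ⟨v, hv, hlow⟩ := hS
    obtain ⟨H, hHS, hH, hw⟩ := ih (S.erase v) (Finset.erase_ssubset hv)
    refine ⟨H, hHS.trans (Finset.erase_subset v S), hH, ?_⟩
    rw [Finset.cast_card_erase_of_mem hv] at hw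
    rw [G.wS_eq_wS_erase_add_deg hv]
    linarith

end WGraph

section ConcaveSize

variable {f : ℕ → ℝ}

lemma mul_le_succ_mul_of_concave (hf0 : f 0 = 0)
    (hconc : ∀ x : ℕ, f x - 2 * f (x + 1) + f (x + 2) ≤ 0) (x : ℕ) :
    x * f (x + 1) ≤ (x + 1) * f x := by
  have hinc : Antitone fun j => f (j + 1) - f j :=
    antitone_nat_of_succ_le fun j => by linarith [hconc j]
  have hsum : ∑ j ∈ Finset.range x, (f (j + 1) - f j) = f x := by
    rw [Finset.sum_range_sub, hf0, sub_zero]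
  have hle := Finset.card_nsmul_le_sum (Finset.range x) _ _
    fun j hj => hinc (Finset.mem_range.mp hj).le
  rw [hsum, Finset.card_range, nsmul_eq_mul] at hle
  linarith

lemma div_le_div_of_concave (hf0 : f 0 = 0)
    (hconc : ∀ x : ℕ, f x - 2 * f (x + 1) + f (x + 2) ≤ 0) {k i : ℕ} (hk : 1 ≤ k) (hki : k ≤ i) :
    f i / i ≤ f k / k := by
  have hanti : Antitone fun x : ℕ => f (x + 1) / (x + 1 : ℕ) := by
    refine antitone_nat_of_succ_le fun x => ?_
    rw [div_le_div_iff₀ (by positivity) (by positivity)]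
    have hstep := mul_le_succ_mul_of_concave hf0 hconc (x + 1)
    push_cast at hstep ⊢
    linarith
  obtain ⟨k, rfl⟩ := Nat.exists_eq_add_of_le' hk
  obtain ⟨i, rfl⟩ := Nat.exists_eq_add_of_le' (hk.trans hki)
  exact hanti (by omega)

end ConcaveSize

def WGraph.IsPeeling (G : WGraph V) (n : ℕ) (Ss : ℕ → Finset V) : Prop :=
  ∀ i, 2 ≤ i → i ≤ n → ∃ v ∈ Ss i,
    (∀ u ∈ Ss i, G.deg (Ss i) v ≤ G.deg (Ss i) u) ∧ Ss (i - 1) = (Ss i).erase v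

namespace WGraph.IsPeeling

variable {G : WGraph V} {n : ℕ} {Ss : ℕ → Finset V}

lemma subset_of_le (hpeel : G.IsPeeling n Ss) {i j : ℕ} (hi : 1 ≤ i) (hij : i ≤ j)
    (hjn : j ≤ n) : Ss i ⊆ Ss j := by
  induction j, hij using Nat.le_induction with
  | base => exact subset_rfl
  | succ j hij ih =>
    obtain ⟨v, -, -, hpred⟩ := hpeel (j + 1) (by omega) hjn
    rw [Nat.add_sub_cancel] at hpred
    exact (ih (by omega)).trans (hpred ▸ Finset.erase_subset v _)

lemma card_eq (hpeel : G.IsPeeling n Ss) (hSn : (Ss n).card = n) {i : ℕ} (hi : 1 ≤ i)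
    (hin : i ≤ n) : (Ss i).card = i := by
  induction hin using Nat.decreasingInduction with
  | self => exact hSn
  | of_succ k hkn ih =>
    obtain ⟨v, hv, -, hpred⟩ := hpeel (k + 1) (by omega) hkn
    rw [Nat.add_sub_cancel] at hpred
    rw [hpred, Finset.card_erase_of_mem hv, ih (by omega), Nat.add_sub_cancel]

lemma le_deg_of_not_subset_pred (hpeel : G.IsPeeling n Ss) {H : Finset V} {c : ℝ}
    (hH : ∀ v ∈ H, c ≤ G.deg H v) {i : ℕ} (hi : 2 ≤ i) (hin : i ≤ n) (hHi : H ⊆ Ss i)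
    (hHpred : ¬ H ⊆ Ss (i - 1)) : ∀ u ∈ Ss i, c ≤ G.deg (Ss i) u := by
  obtain ⟨v, -, hmin, hpred⟩ := hpeel i hi hin
  have hvH : v ∈ H := by
    by_contra hvH
    exact hHpred (hpred ▸ fun x hx => Finset.mem_erase.mpr ⟨ne_of_mem_of_not_mem hx hvH, hHi hx⟩)
  exact fun u hu => (hH v hvH).trans ((G.deg_mono hHi v).trans (hmin u hu))

theorem exists_div_card_le_three_mul (hpeel : G.IsPeeling n Ss) (hSn : Ss n = Finset.univ)
    (hn : n = Fintype.card V) {S : Finset V} (hS : S.Nonempty) :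
    ∃ i, S.card ≤ i ∧ i ≤ n ∧ G.wS S / S.card ≤ 3 * (G.wS (Ss i) / i) := by
  have hk1 : 1 ≤ S.card := hS.card_pos
  have hk : (0 : ℝ) < S.card := by exact_mod_cast hk1
  have hkn : S.card ≤ n := hn ▸ Finset.card_le_univ S
  set c := 2 * G.wS S / (3 * S.card) with hc
  obtain ⟨H, -, hH, hwH⟩ := G.exists_core c S
  have hcore : G.wS S / 3 ≤ G.wS H := by
    have hck : c * S.card = 2 * G.wS S / 3 := by rw [hc]; field_simp
    have hc0 : 0 ≤ c := div_nonneg (mul_nonneg zero_le_two (G.wS_nonneg S)) (by positivity)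
    nlinarith [mul_nonneg hc0 (Nat.cast_nonneg H.card : (0 : ℝ) ≤ H.card)]
  have hHn : 1 ≤ n ∧ H ⊆ Ss n := ⟨hk1.trans hkn, hSn ▸ H.subset_univ⟩
  have hex : ∃ i, 1 ≤ i ∧ H ⊆ Ss i := ⟨n, hHn⟩
  set i := Nat.find hex
  obtain ⟨hi1, hHi⟩ : 1 ≤ i ∧ H ⊆ Ss i := Nat.find_spec hex
  have hin : i ≤ n := Nat.find_min' hex hHn
  rcases le_or_gt i S.card with hik | hki
  · refine ⟨S.card, le_rfl, hkn, ?_⟩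
    have hwk : G.wS S / 3 ≤ G.wS (Ss S.card) :=
      hcore.trans (G.wS_mono (hHi.trans (hpeel.subset_of_le hi1 hik hkn)))
    rw [mul_div_assoc']
    exact div_le_div_of_nonneg_right (by linarith) hk.le
  · refine ⟨i, hki.le, hin, ?_⟩
    have hdeg := hpeel.le_deg_of_not_subset_pred hH (by omega) hin hHi
      fun h => Nat.find_min hex (by omega : i - 1 < i) ⟨by omega, h⟩
    have hw := G.card_mul_le_two_mul_wS hdeg
    rw [hpeel.card_eq (by rw [hSn, Finset.card_univ, hn]) hi1 hin, hc] at hw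
    have hi0 : (0 : ℝ) < i := by exact_mod_cast hi1
    have hcross : G.wS S * i ≤ 3 * G.wS (Ss i) * S.card := by
      rw [mul_div_assoc', div_le_iff₀ (by positivity)] at hw
      linarith
    rw [div_le_iff₀ hk, mul_div_assoc', div_mul_eq_mul_div, le_div_iff₀ hi0]
    linarith

end WGraph.IsPeeling

theorem stmt19_general (G : WGraph V)
    (n : ℕ) (hn : n = Fintype.card V) (hn1 : 1 ≤ n)
    (f : ℕ → ℝ) (hf0 : f 0 = 0) (hfpos : ∀ x, 1 ≤ x → 0 < f x)
    (hconc : ∀ x : ℕ, f x - 2 * f (x + 1) + f (x + 2) ≤ 0)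
    (Sstar : Finset V) (hne : Sstar.Nonempty)
    (Ss : ℕ → Finset V) (hSn : Ss n = Finset.univ)
    (hpeel : ∀ i, 2 ≤ i → i ≤ n → ∃ v ∈ Ss i,
      (∀ u ∈ Ss i, G.deg (Ss i) v ≤ G.deg (Ss i) u) ∧ Ss (i - 1) = (Ss i).erase v) :
    G.wS Sstar / f Sstar.card ≤
      3 * ((Finset.Icc 1 n).sup' (Finset.nonempty_Icc.mpr hn1)
            fun i => G.wS (Ss i) / f i) := by
  obtain ⟨i, hki, hin, hdense⟩ := WGraph.IsPeeling.exists_div_card_le_three_mul hpeel hSn hn hne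
  have hk : 1 ≤ Sstar.card := hne.card_pos
  have hi : 1 ≤ i := hk.trans hki
  calc G.wS Sstar / f Sstar.card
      = (G.wS Sstar / Sstar.card) / (f Sstar.card / Sstar.card) := by
        have : (Sstar.card : ℝ) ≠ 0 := by positivity
        field_simp
    _ ≤ 3 * (G.wS (Ss i) / i) / (f i / i) :=
        div_le_div₀ (by have := G.wS_nonneg (Ss i); positivity) hdense
          (by have := hfpos i hi; positivity) (div_le_div_of_concave hf0 hconc hk hki)
    _ = 3 * (G.wS (Ss i) / f i) := by
        have : (i : ℝ) ≠ 0 := by positivity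
        field_simp
    _ ≤ 3 * ((Finset.Icc 1 n).sup' (Finset.nonempty_Icc.mpr hn1)
            fun i => G.wS (Ss i) / f i) := by
        gcongr
        exact Finset.le_sup' (fun i => G.wS (Ss i) / f i) (Finset.mem_Icc.mpr ⟨hi, hin⟩)

theorem stmt19 (G : WGraph V) (hE : G.E.Nonempty)
    (n : ℕ) (hn : n = Fintype.card V) (hn1 : 1 ≤ n)
    (f : ℕ → ℝ) (hmono : Monotone f) (hf0 : f 0 = 0) (hfpos : ∀ x, 1 ≤ x → 0 < f x)
    (hconc : ∀ x : ℕ, f x - 2 * f (x + 1) + f (x + 2) ≤ 0)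
    (Sstar : Finset V) (hne : Sstar.Nonempty)
    (hopt : ∀ S : Finset V, S.Nonempty → G.wS S / f S.card ≤ G.wS Sstar / f Sstar.card)
    (Ss : ℕ → Finset V) (hSn : Ss n = Finset.univ)
    (hpeel : ∀ i, 2 ≤ i → i ≤ n → ∃ v ∈ Ss i,
      (∀ u ∈ Ss i, G.deg (Ss i) v ≤ G.deg (Ss i) u) ∧ Ss (i - 1) = (Ss i).erase v) :
    G.wS Sstar / f Sstar.card ≤
      3 * ((Finset.Icc 1 n).sup' (Finset.nonempty_Icc.mpr hn1)
            fun i => G.wS (Ss i) / f i) :=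
  stmt19_general G n hn hn1 f hf0 hfpos hconc Sstar hne Ss hSn hpeel
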